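/- arXiv:1907.13502 — 5 statements merged into one kernel-verified Lean document; each statement's English description precedes it below -/
import Mathlib

section
/- Let 0 < r < s. Then cosh(s)/cosh(r) < e^{s-r} < sinh(s)/sinh(r). -/
open Real

/-! Writing `s = r + t`, the addition formulas together with `cosh r - sinh r = exp (-r)` give
`exp t * cosh r - cosh s = sinh t * exp (-r) = sinh s - exp t * sinh r`, which is positive for
`t > 0`. -/

namespace Real

theorem exp_mul_cosh_sub_cosh_add (r t : ℝ) :
    exp t * cosh r - cosh (r + t) = sinh t * exp (-r) := by
  rw [← cosh_add_sinh t, ← cosh_sub_sinh r, cosh_add]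
  ring

theorem sinh_add_sub_exp_mul_sinh (r t : ℝ) :
    sinh (r + t) - exp t * sinh r = sinh t * exp (-r) := by
  rw [← cosh_add_sinh t, ← cosh_sub_sinh r, sinh_add]
  ring

theorem cosh_add_lt_exp_mul_cosh (r : ℝ) {t : ℝ} (ht : 0 < t) :
    cosh (r + t) < exp t * cosh r :=
  sub_pos.mp <| exp_mul_cosh_sub_cosh_add r t ▸ mul_pos (sinh_pos_iff.mpr ht) (exp_pos _)

theorem exp_mul_sinh_lt_sinh_add (r : ℝ) {t : ℝ} (ht : 0 < t) :
    exp t * sinh r < sinh (r + t) :=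
  sub_pos.mp <| sinh_add_sub_exp_mul_sinh r t ▸ mul_pos (sinh_pos_iff.mpr ht) (exp_pos _)

end Real

theorem cosh_sinh_exp_growth (r s : ℝ) (hr : 0 < r) (hrs : r < s) :
    Real.cosh s / Real.cosh r < Real.exp (s - r) ∧
    Real.exp (s - r) < Real.sinh s / Real.sinh r := by
  have ht : 0 < s - r := sub_pos.mpr hrs
  have hs : r + (s - r) = s := add_sub_cancel r s
  constructor
  · rw [div_lt_iff₀ (cosh_pos r)]
    simpa only [hs] using cosh_add_lt_exp_mul_cosh r ht
  · rw [lt_div_iff₀ (sinh_pos_iff.mpr hr)]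
    simpa only [hs] using exp_mul_sinh_lt_sinh_add r ht
end

section
/- Define f(s,z) = cosh(s) - z^{-1} sinh(s). Suppose 0 < s ≤ s_max and tanh(s_max) ≤ z_min ≤ tanh(r) for real numbers s_max, z_min, r with r > 0. Then sinh(r-s) ≥ sinh(r)·f(s_max, z_min) ≥ e^r · (z_min/(1+z_min)) · f(s_max, z_min). -/
/-!
Since `sinh r / tanh r = cosh r`, we have `sinh (r - s) = sinh r * f(s, tanh r)`. For `s ≥ 0` the
function `f(s, ·)` increases on `(0, ∞)`, and for `0 < z ≤ 1` the function `f(·, z)` decreases,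
because `f(t, z) = exp (-t) - (z⁻¹ - 1) sinh t`. Hence
`f(s_max, z_min) ≤ f(s, z_min) ≤ f(s, tanh r)`, and `f(s_max, z_min) ≥ f(s_max, tanh s_max) = 0`.
The second inequality follows from `exp r * (tanh r / (1 + tanh r)) = sinh r` and the monotonicity
of `z ↦ z / (1 + z)`.
-/

open Real

/-- f(s,z) = cosh s − z⁻¹ · sinh s -/
noncomputable def fSinhDiff (s z : ℝ) : ℝ := Real.cosh s - Real.sinh s / z

theorem Real.tanh_pos_of_pos {x : ℝ} (hx : 0 < x) : 0 < tanh x := by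
  rw [tanh_eq_sinh_div_cosh]
  exact div_pos (sinh_pos_iff.2 hx) (cosh_pos x)

theorem Real.exp_mul_tanh_div_one_add_tanh (r : ℝ) : exp r * (tanh r / (1 + tanh r)) = sinh r := by
  rw [tanh_eq_sinh_div_cosh, ← cosh_add_sinh]
  field_simp [(cosh_pos r).ne']

theorem fSinhDiff_tanh {r : ℝ} (hr : r ≠ 0) (s : ℝ) :
    fSinhDiff s (tanh r) = sinh (r - s) / sinh r := by
  have hsinh : sinh r ≠ 0 := by rwa [Ne, sinh_eq_zero]
  rw [fSinhDiff, tanh_eq_sinh_div_cosh, sinh_sub]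
  field_simp [(cosh_pos r).ne']

theorem fSinhDiff_eq_exp_neg_sub (t z : ℝ) : fSinhDiff t z = exp (-t) - (z⁻¹ - 1) * sinh t := by
  rw [fSinhDiff, ← cosh_sub_sinh]
  ring

theorem fSinhDiff_antitone_left {z : ℝ} (hz : 0 < z) (hz1 : z ≤ 1) :
    Antitone (fun t ↦ fSinhDiff t z) := by
  intro a b hab
  have hcoef : 0 ≤ z⁻¹ - 1 := sub_nonneg.2 (one_le_inv₀ hz |>.2 hz1)
  simp only [fSinhDiff_eq_exp_neg_sub]
  gcongr
  exact sinh_le_sinh.2 hab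

theorem fSinhDiff_monotoneOn_right {s : ℝ} (hs : 0 ≤ s) : MonotoneOn (fSinhDiff s) (Set.Ioi 0) := by
  intro a ha b _ hab
  have hsinh : 0 ≤ sinh s := sinh_nonneg_iff.2 hs
  simp only [fSinhDiff]
  gcongr

theorem sinh_diff_bound (s smax zmin r : ℝ)
    (hs : 0 < s) (hsmax : s ≤ smax)
    (h1 : Real.tanh smax ≤ zmin) (h2 : zmin ≤ Real.tanh r) (hr : 0 < r) :
    Real.sinh r * fSinhDiff smax zmin ≤ Real.sinh (r - s) ∧
    Real.exp r * (zmin / (1 + zmin)) * fSinhDiff smax zmin ≤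
      Real.sinh r * fSinhDiff smax zmin := by
  have hsmax0 : 0 < smax := hs.trans_le hsmax
  have hz : 0 < zmin := (tanh_pos_of_pos hsmax0).trans_le h1
  have hz1 : zmin ≤ 1 := h2.trans (tanh_lt_one r).le
  have hsinh : 0 < sinh r := sinh_pos_iff.2 hr
  have hf : 0 ≤ fSinhDiff smax zmin := by
    simpa [fSinhDiff_tanh hsmax0.ne'] using
      fSinhDiff_monotoneOn_right hsmax0.le (tanh_pos_of_pos hsmax0) hz h1
  constructor
  · calc sinh r * fSinhDiff smax zmin ≤ sinh r * fSinhDiff s zmin := by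
          gcongr; exact fSinhDiff_antitone_left hz hz1 hsmax
      _ ≤ sinh r * fSinhDiff s (tanh r) := by
          gcongr; exact fSinhDiff_monotoneOn_right hs.le hz (hz.trans_le h2) h2
      _ = sinh (r - s) := by rw [fSinhDiff_tanh hr.ne', mul_div_cancel₀ _ hsinh.ne']
  · refine mul_le_mul_of_nonneg_right ?_ hf
    calc exp r * (zmin / (1 + zmin)) ≤ exp r * (tanh r / (1 + tanh r)) := by
          refine mul_le_mul_of_nonneg_left ?_ (exp_pos r).le
          rw [div_le_div_iff₀ (by positivity) (by linarith [neg_one_lt_tanh r])]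
          nlinarith
      _ = sinh r := exp_mul_tanh_div_one_add_tanh r
end

section
/- Define Sab(x,y) = (sinh x · cosh x · sinh² y)/(sinh(x+y) · cosh(x+y)) for x, y > 0. Then Sab is strictly increasing in each variable: ∂Sab/∂x = sinh(2y)(cosh(2y)−1)/sinh²(2x+2y) > 0 and ∂Sab/∂y = (cosh(2x+2y) − cosh(2y)) · sinh(2x)/sinh²(2x+2y) > 0. -/
/-!
Doubling the angles, `1 / Sab x y = 2 + 1 / sinh² y + 2 coth (2x) coth y`. Since `sinh` is
positive and increasing and `coth` is positive and decreasing on `(0, ∞)`, the right-hand side is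
strictly decreasing in each variable, hence `Sab` is strictly increasing in each.
-/

open Real

/-- Sab(x,y) = sinh x · cosh x · sinh² y / (sinh(x+y) · cosh(x+y)) -/
noncomputable def Sab (x y : ℝ) : ℝ :=
  Real.sinh x * Real.cosh x * (Real.sinh y) ^ 2 /
    (Real.sinh (x + y) * Real.cosh (x + y))

namespace Real

noncomputable def coth (x : ℝ) : ℝ := cosh x / sinh x

theorem coth_pos {x : ℝ} (hx : 0 < x) : 0 < coth x :=
  div_pos (cosh_pos x) (sinh_pos_iff.mpr hx)

theorem coth_strictAntiOn : StrictAntiOn coth (Set.Ioi 0) := by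
  intro p hp q hq hpq
  have hsp : 0 < sinh p := sinh_pos_iff.mpr hp
  have hsq : 0 < sinh q := sinh_pos_iff.mpr hq
  have hsub : 0 < sinh (q - p) := sinh_pos_iff.mpr (sub_pos.mpr hpq)
  rw [coth, coth, div_lt_div_iff₀ hsq hsp]
  rw [sinh_sub] at hsub
  linarith

end Real

theorem Sab_pos {x y : ℝ} (hx : 0 < x) (hy : 0 < y) : 0 < Sab x y := by
  have := sinh_pos_iff.mpr hx
  have := sinh_pos_iff.mpr (add_pos hx hy)
  unfold Sab
  positivity

theorem inv_Sab {x y : ℝ} (hx : x ≠ 0) (hy : y ≠ 0) :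
    (Sab x y)⁻¹ = 2 + (sinh y ^ 2)⁻¹ + 2 * coth (2 * x) * coth y := by
  have hsx : sinh x ≠ 0 := sinh_ne_zero.mpr hx
  have hcx : cosh x ≠ 0 := (cosh_pos x).ne'
  have hsy : sinh y ≠ 0 := sinh_ne_zero.mpr hy
  have hs2x : sinh (2 * x) ≠ 0 := sinh_ne_zero.mpr (mul_ne_zero two_ne_zero hx)
  have hdouble : sinh (x + y) * cosh (x + y) = sinh (2 * x + 2 * y) / 2 := by
    rw [show 2 * x + 2 * y = 2 * (x + y) by ring, sinh_two_mul]; ring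
  rw [Sab, inv_div, hdouble, sinh_add, cosh_two_mul, sinh_two_mul y, coth, coth,
    sinh_two_mul x, cosh_sq y]
  field_simp
  ring

theorem Sab_strict_mono :
    (∀ x x' y : ℝ, 0 < x → x < x' → 0 < y → Sab x y < Sab x' y) ∧
    (∀ x y y' : ℝ, 0 < x → 0 < y → y < y' → Sab x y < Sab x y') := by
  refine ⟨fun x x' y hx hxx' hy => ?_, fun x y y' hx hy hyy' => ?_⟩
  · have hx' : 0 < x' := hx.trans hxx'
    refine (inv_lt_inv₀ (Sab_pos hx' hy) (Sab_pos hx hy)).mp ?_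
    rw [inv_Sab hx.ne' hy.ne', inv_Sab hx'.ne' hy.ne']
    have := coth_pos hy
    gcongr
    exact coth_strictAntiOn (by positivity : 0 < 2 * x) (by positivity : 0 < 2 * x')
      (by linarith)
  · have hy' : 0 < y' := hy.trans hyy'
    refine (inv_lt_inv₀ (Sab_pos hx hy') (Sab_pos hx hy)).mp ?_
    rw [inv_Sab hx.ne' hy.ne', inv_Sab hx.ne' hy'.ne']
    have := coth_pos (by positivity : 0 < 2 * x)
    gcongr
    · exact sinh_lt_sinh.mpr hyy'
    · exact coth_strictAntiOn hy hy' hyy'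
end

section
/- For fixed x > 0, the function y ↦ sinh(x)·sinh(y)/sinh(x+y) is strictly increasing in y on (0,∞), and for fixed y > 0 it is strictly increasing in x on (0,∞). -/
open Real Set

noncomputable def semiAxis (x y : ℝ) : ℝ := sinh x * sinh y / sinh (x + y)

lemma semiAxis_comm (x y : ℝ) : semiAxis x y = semiAxis y x := by
  rw [semiAxis, semiAxis, mul_comm, add_comm]

lemma sinh_add_mul_sinh_sub_sinh_add_mul_sinh (x a b : ℝ) :
    sinh (x + b) * sinh a - sinh (x + a) * sinh b = sinh x * sinh (a - b) := by
  rw [sinh_add, sinh_add, sinh_sub]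
  ring

lemma strictMonoOn_semiAxis {x : ℝ} (hx : 0 < x) : StrictMonoOn (semiAxis x) (Ioi 0) := by
  intro a (ha : 0 < a) b (hb : 0 < b) hab
  have hxa : 0 < sinh (x + a) := sinh_pos_iff.2 (by linarith)
  have hxb : 0 < sinh (x + b) := sinh_pos_iff.2 (by linarith)
  have key : 0 < sinh x * (sinh x * sinh (b - a)) :=
    mul_pos (sinh_pos_iff.2 hx) (mul_pos (sinh_pos_iff.2 hx) (sinh_pos_iff.2 (by linarith)))
  rw [semiAxis, semiAxis, div_lt_div_iff₀ hxa hxb]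
  linear_combination key - sinh x * sinh_add_mul_sinh_sub_sinh_add_mul_sinh x b a

theorem ellipse_axis_mono :
    (∀ x y y' : ℝ, 0 < x → 0 < y → y < y' →
      Real.sinh x * Real.sinh y / Real.sinh (x + y) <
        Real.sinh x * Real.sinh y' / Real.sinh (x + y')) ∧
    (∀ x x' y : ℝ, 0 < x → x < x' → 0 < y →
      Real.sinh x * Real.sinh y / Real.sinh (x + y) <
        Real.sinh x' * Real.sinh y / Real.sinh (x' + y)) := by
  refine ⟨fun x y y' hx hy hyy' => strictMonoOn_semiAxis hx hy (hy.trans hyy') hyy', ?_⟩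
  intro x x' y hx hxx' hy
  have h := strictMonoOn_semiAxis hy hx (hx.trans hxx') hxx'
  rwa [semiAxis_comm y x, semiAxis_comm y x'] at h
end

section
/- Define Φ(r) = 2·f(r)²·C² − 3r³(sinh(2r) − 2r), where f(r) = cosh(r)·sin(√2·r) − √2·sinh(r)·cos(√2·r) and C = 1.046. The Taylor expansion of Φ at r = 0 begins 4(C²−1)r⁶ − (4/5)(C²+1)r⁸ + O(r¹⁰); in particular, Φ(r) > 0 for all sufficiently small r > 0. -/
open Real Filter Asymptotics

/-- f(r) = cosh r · sin(√2 r) − √2 sinh r · cos(√2 r) -/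
noncomputable def fMV (r : ℝ) : ℝ :=
  Real.cosh r * Real.sin (Real.sqrt 2 * r) -
    Real.sqrt 2 * Real.sinh r * Real.cos (Real.sqrt 2 * r)

/-- Φ(r) = 2 f(r)² C² − 3r³(sinh 2r − 2r) with C = 1.046 -/
noncomputable def PhiMV (r : ℝ) : ℝ :=
  2 * (fMV r) ^ 2 * (1.046 : ℝ) ^ 2 - 3 * r ^ 3 * (Real.sinh (2 * r) - 2 * r)

/-!
The Taylor expansions of cosh, sinh at `r` and of sin, cos at `√2 r` give
`f r = √2 (r³ - r⁵/10) + O(r⁷)`. Since also `f r + √2 (r³ - r⁵/10) = O(r³)`, the product of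
the two is `O(r¹⁰)`, so `f r ^ 2 = 2 (r³ - r⁵/10)² + O(r¹⁰)`; with
`sinh 2r - 2r = 4r³/3 + 4r⁵/15 + O(r⁷)` this is the expansion of `Φ`. Its leading coefficient
`4 (C² - 1)` is positive, so `Φ > 0` near `0⁺`.
-/

open Topology Set

theorem isLittleO_sub_taylor_zero {f p : ℝ → ℝ} {n : ℕ} (hf : ContDiff ℝ n f)
    (hp : taylorWithinEval f n univ 0 = p) : (fun x => f x - p x) =o[𝓝 0] (· ^ n) := by
  simpa [hp] using taylor_isLittleO_univ (x₀ := 0) hf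

theorem Real.sin_sub_taylor_isLittleO :
    (fun x => sin x - (x - x ^ 3 / 6 + x ^ 5 / 120 - x ^ 7 / 5040)) =o[𝓝 0] (· ^ 7) :=
  isLittleO_sub_taylor_zero contDiff_sin <| funext fun x => by
    simp [taylorWithinEval_succ, iteratedDerivWithin_univ, Nat.factorial]; ring

theorem Real.cos_sub_taylor_isLittleO :
    (fun x => cos x - (1 - x ^ 2 / 2 + x ^ 4 / 24 - x ^ 6 / 720)) =o[𝓝 0] (· ^ 7) :=
  isLittleO_sub_taylor_zero contDiff_cos <| funext fun x => by
    simp [taylorWithinEval_succ, iteratedDerivWithin_univ, Nat.factorial]; ring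

theorem Real.sinh_sub_taylor_isLittleO :
    (fun x => sinh x - (x + x ^ 3 / 6 + x ^ 5 / 120 + x ^ 7 / 5040)) =o[𝓝 0] (· ^ 7) :=
  isLittleO_sub_taylor_zero contDiff_sinh <| funext fun x => by
    simp [taylorWithinEval_succ, iteratedDerivWithin_univ, Nat.factorial]; ring

theorem Real.cosh_sub_taylor_isLittleO :
    (fun x => cosh x - (1 + x ^ 2 / 2 + x ^ 4 / 24 + x ^ 6 / 720)) =o[𝓝 0] (· ^ 7) :=
  isLittleO_sub_taylor_zero contDiff_cosh <| funext fun x => by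
    simp [taylorWithinEval_succ, iteratedDerivWithin_univ, Nat.factorial]; ring

section NormedField

variable {𝕜 E : Type*} [NormedField 𝕜] [NormedAddCommGroup E]

theorem Asymptotics.IsLittleO.comp_const_mul_pow {f : 𝕜 → E} {n : ℕ}
    (h : f =o[𝓝 0] (· ^ n)) (c : 𝕜) : (fun x => f (c * x)) =o[𝓝 0] (· ^ n) := by
  have hc : Tendsto (c * ·) (𝓝 0) (𝓝 0) := by
    simpa using (continuous_const_mul c).tendsto 0
  refine (h.comp_tendsto hc).trans_isBigO ?_
  simpa only [Function.comp_def, mul_pow] using (isBigO_refl (· ^ n) (𝓝 0)).const_mul_left (c ^ n)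

theorem pow_mul_isBigO_pow {q : 𝕜 → 𝕜} (hq : ContinuousAt q 0) (k : ℕ) :
    (fun x => x ^ k * q x) =O[𝓝 0] (· ^ k) := by
  simpa using (isBigO_refl (· ^ k) (𝓝 0)).mul (hq.tendsto.isBigO_one 𝕜)

end NormedField

theorem sin_sqrt_two_mul_sub_taylor_isLittleO :
    (fun x => sin (√2 * x) - √2 * (x - x ^ 3 / 3 + x ^ 5 / 30 - x ^ 7 / 630)) =o[𝓝 0] (· ^ 7) := by
  have hs : √2 ^ 2 = 2 := sq_sqrt zero_le_two
  refine (sin_sub_taylor_isLittleO.comp_const_mul_pow √2).congr_left fun x => ?_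
  linear_combination (x ^ 3 * √2 / 6 - x ^ 5 * √2 * (√2 ^ 2 + 2) / 120
    + x ^ 7 * √2 * (√2 ^ 4 + 2 * √2 ^ 2 + 4) / 5040) * hs

theorem cos_sqrt_two_mul_sub_taylor_isLittleO :
    (fun x => cos (√2 * x) - (1 - x ^ 2 + x ^ 4 / 6 - x ^ 6 / 90)) =o[𝓝 0] (· ^ 7) := by
  have hs : √2 ^ 2 = 2 := sq_sqrt zero_le_two
  refine (cos_sub_taylor_isLittleO.comp_const_mul_pow √2).congr_left fun x => ?_
  linear_combination (x ^ 2 / 2 - x ^ 4 * (√2 ^ 2 + 2) / 24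
    + x ^ 6 * (√2 ^ 4 + 2 * √2 ^ 2 + 4) / 720) * hs

theorem sinh_two_mul_sub_taylor_isLittleO :
    (fun x => sinh (2 * x) - (2 * x + 4 / 3 * x ^ 3 + 4 / 15 * x ^ 5 + 8 / 315 * x ^ 7))
      =o[𝓝 0] (· ^ 7) :=
  (sinh_sub_taylor_isLittleO.comp_const_mul_pow 2).congr_left fun x => by ring

theorem fMV_sub_taylor_isBigO :
    (fun r => fMV r - √2 * (r ^ 3 - r ^ 5 / 10)) =O[𝓝 0] (· ^ 7) := by
  have hbdd {g : ℝ → ℝ} (hg : Continuous g) : g =O[𝓝 0] (fun _ => (1 : ℝ)) :=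
    (hg.tendsto 0).isBigO_one ℝ
  have hcosh := cosh_sub_taylor_isLittleO.isBigO.mul
    (hbdd (g := fun r => sin (√2 * r)) (by fun_prop))
  have hsin := (hbdd (g := fun r => 1 + r ^ 2 / 2 + r ^ 4 / 24 + r ^ 6 / 720) (by fun_prop)).mul
    sin_sqrt_two_mul_sub_taylor_isLittleO.isBigO
  have hsinh := sinh_sub_taylor_isLittleO.isBigO.mul
    (hbdd (g := fun r => cos (√2 * r)) (by fun_prop))
  have hcos := (hbdd (g := fun r => r + r ^ 3 / 6 + r ^ 5 / 120 + r ^ 7 / 5040) (by fun_prop)).mul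
    cos_sqrt_two_mul_sub_taylor_isLittleO.isBigO
  -- the product of the Taylor polynomials minus `√2 (r³ - r⁵/10)`
  have hpoly := pow_mul_isBigO_pow (q := fun r => √2 * (-1 / 168 + r ^ 2 / 1260 + r ^ 4 / 25200))
    (by fun_prop) 7
  simp only [mul_one, one_mul] at hcosh hsin hsinh hcos
  refine ((((hcosh.add hsin).sub ((hsinh.add hcos).const_mul_left √2))).add hpoly).congr_left
    fun r => ?_
  simp only [fMV]
  ring

theorem PhiMV_sub_taylor_isBigO :
    (fun r => PhiMV r -
        (4 * ((1.046 : ℝ) ^ 2 - 1) * r ^ 6 - (4 / 5) * ((1.046 : ℝ) ^ 2 + 1) * r ^ 8))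
      =O[𝓝 0] (· ^ 10) := by
  have hs : √2 ^ 2 = 2 := sq_sqrt zero_le_two
  have hf := fMV_sub_taylor_isBigO
  have hf_add : (fun r => fMV r + √2 * (r ^ 3 - r ^ 5 / 10)) =O[𝓝 0] (· ^ 3) :=
    ((hf.trans (isLittleO_pow_pow (by norm_num : 3 < 7)).isBigO).add
      (pow_mul_isBigO_pow (q := fun r => 2 * √2 * (1 - r ^ 2 / 10)) (by fun_prop) 3)).congr_left
      fun r => by ring
  have hsq := (hf.mul hf_add).congr_right fun r => (pow_add r 7 3).symm
  have hsinh := ((isBigO_refl (· ^ 3) (𝓝 (0 : ℝ))).mul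
    sinh_two_mul_sub_taylor_isLittleO.isBigO).congr_right fun r => (pow_add r 3 7).symm
  -- `C² r¹⁰ / 25` comes from `(r⁵/10)²`, and `-8 r¹⁰ / 105` from the `r⁷` term of `sinh 2r`
  refine (((hsq.const_mul_left (2 * 1.046 ^ 2)).sub (hsinh.const_mul_left 3)).add
    ((isBigO_refl (· ^ 10) (𝓝 (0 : ℝ))).const_mul_left (1.046 ^ 2 / 25 - 8 / 105))).congr_left
    fun r => ?_
  simp only [PhiMV]
  linear_combination (-2 * 1.046 ^ 2 * (r ^ 3 - r ^ 5 / 10) ^ 2) * hs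

theorem eventually_pos_of_sub_const_mul_pow_isLittleO {g : ℝ → ℝ} {a : ℝ} {n : ℕ} (ha : 0 < a)
    (h : (fun r => g r - a * r ^ n) =o[𝓝 0] (· ^ n)) : ∀ᶠ r in 𝓝[>] 0, 0 < g r := by
  filter_upwards [self_mem_nhdsWithin, nhdsWithin_le_nhds (h.def (half_pos ha))] with r hr hg
  have hrn : 0 < r ^ n := pow_pos hr n
  rw [Real.norm_eq_abs, Real.norm_of_nonneg hrn.le] at hg
  linarith [neg_abs_le (g r - a * r ^ n), mul_pos ha hrn]

theorem PhiMV_taylor_and_pos :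
    (fun r : ℝ => PhiMV r -
        (4 * ((1.046 : ℝ) ^ 2 - 1) * r ^ 6 - (4 / 5) * ((1.046 : ℝ) ^ 2 + 1) * r ^ 8))
      =O[nhds (0 : ℝ)] (fun r : ℝ => r ^ 10) ∧
    ∃ r₀ > (0 : ℝ), ∀ r : ℝ, 0 < r → r < r₀ → 0 < PhiMV r := by
  refine ⟨PhiMV_sub_taylor_isBigO, ?_⟩
  have hr8 := (isLittleO_pow_pow (𝕜 := ℝ) (by norm_num : 6 < 8)).const_mul_left
    (4 / 5 * (1.046 ^ 2 + 1))
  have hlead : (fun r => PhiMV r - 4 * ((1.046 : ℝ) ^ 2 - 1) * r ^ 6) =o[𝓝 0] (· ^ 6) :=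
    ((PhiMV_sub_taylor_isBigO.trans_isLittleO (isLittleO_pow_pow (by norm_num))).sub hr8).congr_left
      fun r => by ring
  obtain ⟨r₀, hr₀, hpos⟩ := mem_nhdsGT_iff_exists_Ioo_subset.1
    (eventually_pos_of_sub_const_mul_pow_isLittleO (by norm_num) hlead)
  exact ⟨r₀, hr₀, fun r hr hrr₀ => hpos ⟨hr, hrr₀⟩⟩
end
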